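/- arXiv:2110.14111 — 3 statements merged into one kernel-verified Lean document; each statement's English description precedes it below -/
import Mathlib

section
/- If S is an invertible m×m matrix and T is an invertible n×n matrix over F (= ℝ or ℂ), x ∈ 𝒞(S), and y ∈ 𝒞(T), then x ⊗ y ∈ 𝒞(S ⊗ T). That is, 𝒞(S) ⊗ 𝒞(T) ⊆ 𝒞(S ⊗ T). -/
/-- The Kronecker product of vectors. -/
def vecKron {F : Type*} [Mul F] {m n : ℕ} (x : Fin m → F) (y : Fin n → F) :
    Fin (m * n) → F :=
  fun i => x i.divNat * y i.modNat

/-- The Kronecker product of matrices. -/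
def matKron {F : Type*} [Mul F] {m n p q : ℕ}
    (S : Matrix (Fin m) (Fin n) F) (T : Matrix (Fin p) (Fin q) F) :
    Matrix (Fin (m * p)) (Fin (n * q)) F :=
  fun i j => S i.divNat j.divNat * T i.modNat j.modNat

/-- An entry of a matrix over `F = ℝ` or `ℂ` is nonnegative:
it is a nonnegative real number. -/
def entryNonneg {F : Type*} [RCLike F] (z : F) : Prop :=
  ∃ r : ℝ, 0 ≤ r ∧ z = (r : F)

/-- The Perron spectracone `𝒞(S) = {x : S D_x S⁻¹ ≥ 0 entrywise}`. -/
def spectracone {F : Type*} [RCLike F] {n : ℕ} (S : Matrix (Fin n) (Fin n) F) :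
    Set (Fin n → F) :=
  {x | ∀ i j, entryNonneg ((S * Matrix.diagonal x * S⁻¹) i j)}

/-
Since `D_{x ⊗ y} = D_x ⊗ D_y` and the Kronecker product is compatible with products and inverses,
`(S ⊗ T) D_{x ⊗ y} (S ⊗ T)⁻¹ = (S D_x S⁻¹) ⊗ (T D_y T⁻¹)`; each entry of this matrix is the product
of an entry of each factor, and a product of nonnegative reals is a nonnegative real.
-/

open Matrix
open scoped Kronecker

section Kronecker

variable {R : Type*}

theorem matKron_eq_reindex_kronecker [Mul R] {m n p q : ℕ}
    (S : Matrix (Fin m) (Fin n) R) (T : Matrix (Fin p) (Fin q) R) :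
    matKron S T = reindex finProdFinEquiv finProdFinEquiv (S ⊗ₖ T) :=
  rfl

theorem diagonal_vecKron [MulZeroClass R] {m n : ℕ} (x : Fin m → R) (y : Fin n → R) :
    diagonal (vecKron x y) =
      reindex finProdFinEquiv finProdFinEquiv (diagonal x ⊗ₖ diagonal y) := by
  rw [diagonal_kronecker_diagonal, reindex_apply, submatrix_diagonal_equiv]
  rfl

theorem matKron_mul_diagonal_vecKron_mul_inv [CommRing R] {m n : ℕ}
    (S : Matrix (Fin m) (Fin m) R) (T : Matrix (Fin n) (Fin n) R)
    (x : Fin m → R) (y : Fin n → R) :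
    matKron S T * diagonal (vecKron x y) * (matKron S T)⁻¹ =
      matKron (S * diagonal x * S⁻¹) (T * diagonal y * T⁻¹) := by
  rw [matKron_eq_reindex_kronecker, diagonal_vecKron, inv_reindex, reindex_apply, reindex_apply,
    reindex_apply, submatrix_mul_equiv, submatrix_mul_equiv, inv_kronecker, ← mul_kronecker_mul,
    ← mul_kronecker_mul]
  rfl

end Kronecker

theorem entryNonneg.mul {F : Type*} [RCLike F] {a b : F}
    (ha : entryNonneg a) (hb : entryNonneg b) : entryNonneg (a * b) := by
  obtain ⟨r, hr, rfl⟩ := ha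
  obtain ⟨s, hs, rfl⟩ := hb
  exact ⟨r * s, mul_nonneg hr hs, by push_cast; rfl⟩

theorem vecKron_mem_spectracone_matKron_general {F : Type*} [RCLike F] {m n : ℕ}
    (S : Matrix (Fin m) (Fin m) F) (T : Matrix (Fin n) (Fin n) F)
    (x : Fin m → F) (y : Fin n → F)
    (hx : x ∈ spectracone S) (hy : y ∈ spectracone T) :
    vecKron x y ∈ spectracone (matKron S T) := by
  intro i j
  rw [matKron_mul_diagonal_vecKron_mul_inv]
  exact (hx i.divNat j.divNat).mul (hy i.modNat j.modNat)

/-- `𝒞(S) ⊗ 𝒞(T) ⊆ 𝒞(S ⊗ T)`. -/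
theorem vecKron_mem_spectracone_matKron {F : Type*} [RCLike F] {m n : ℕ}
    (S : Matrix (Fin m) (Fin m) F) (T : Matrix (Fin n) (Fin n) F)
    (hS : IsUnit S.det) (hT : IsUnit T.det)
    (x : Fin m → F) (y : Fin n → F)
    (hx : x ∈ spectracone S) (hy : y ∈ spectracone T) :
    vecKron x y ∈ spectracone (matKron S T) :=
  vecKron_mem_spectracone_matKron_general S T x y hx hy
end

section
/- Let x ∈ ℝ^m and y ∈ ℝ^n be totally nonzero vectors, neither a scalar multiple of the all-ones vector, so there exist indices i ≠ j and k ≠ ℓ with x_i ≠ x_j and y_k ≠ y_ℓ. Then for any ε > 0, the vector z' = x ⊗ y + ε·e ∈ ℝ^{mn} is not a Kronecker product of any two vectors: there do not exist x' ∈ ℝ^m, y' ∈ ℝ^n with z' = x' ⊗ y', provided z' is totally nonzero. -/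
theorem vecKron_finProdFinEquiv {F : Type*} [Mul F] {m n : ℕ} (x : Fin m → F) (y : Fin n → F)
    (a : Fin m) (b : Fin n) : vecKron x y (finProdFinEquiv (a, b)) = x a * y b := by
  have h := finProdFinEquiv.symm_apply_apply (a, b)
  rw [finProdFinEquiv_symm_apply, Prod.mk.injEq] at h
  rw [vecKron, h.1, h.2]

/-- The rank-one pattern `x' a * y' b` satisfies the cross-ratio identity, whose two sides
differ by exactly `ε (x i - x j) (y k - y l)` for the pattern `x a * y b + ε`. -/
theorem mul_sub_mul_sub_eq_zero_of_add_eq_mul {R ι κ : Type*} [CommRing R]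
    {x x' : ι → R} {y y' : κ → R} {ε : R} (h : ∀ a b, x a * y b + ε = x' a * y' b)
    (i j : ι) (k l : κ) : ε * ((x i - x j) * (y k - y l)) = 0 := by
  have cross : (x i * y k + ε) * (x j * y l + ε) = (x i * y l + ε) * (x j * y k + ε) := by
    rw [h, h, h, h]; ring
  linear_combination cross

theorem kron_plus_eps_not_kron_general {m n : ℕ}
    (x : Fin m → ℝ) (y : Fin n → ℝ)
    (i j : Fin m) (k l : Fin n)
    (hxij : x i ≠ x j) (hykl : y k ≠ y l)
    (ε : ℝ) (hε : 0 < ε) :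
    ¬∃ (x' : Fin m → ℝ) (y' : Fin n → ℝ),
        (fun t => vecKron x y t + ε) = vecKron x' y' := by
  rintro ⟨x', y', h⟩
  have entries : ∀ a b, x a * y b + ε = x' a * y' b := fun a b => by
    simpa only [vecKron_finProdFinEquiv] using congrFun h (finProdFinEquiv (a, b))
  exact mul_ne_zero hε.ne' (mul_ne_zero (sub_ne_zero.mpr hxij) (sub_ne_zero.mpr hykl))
    (mul_sub_mul_sub_eq_zero_of_add_eq_mul entries i j k l)

/-- If `x ∈ ℝ^m` and `y ∈ ℝ^n` are totally nonzero, neither a scalar multiple of the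
all-ones vector (witnessed by `x_i ≠ x_j`, `y_k ≠ y_ℓ`), and `ε > 0`, then
`z' = x ⊗ y + ε·e`, provided it is totally nonzero, is not a Kronecker product of
any two vectors. -/
theorem kron_plus_eps_not_kron {m n : ℕ}
    (x : Fin m → ℝ) (y : Fin n → ℝ)
    (hx : ∀ a, x a ≠ 0) (hy : ∀ b, y b ≠ 0)
    (i j : Fin m) (k l : Fin n) (hij : i ≠ j) (hkl : k ≠ l)
    (hxij : x i ≠ x j) (hykl : y k ≠ y l)
    (ε : ℝ) (hε : 0 < ε)
    (hz' : ∀ t : Fin (m * n), vecKron x y t + ε ≠ 0) :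
    ¬∃ (x' : Fin m → ℝ) (y' : Fin n → ℝ),
        (fun t => vecKron x y t + ε) = vecKron x' y' :=
  kron_plus_eps_not_kron_general x y i j k l hxij hykl ε hε
end

section
/- For n ≥ 1, the n×n discrete Fourier transform matrix F with entries F_{ij} = ω^{(i-1)(j-1)}, ω = exp(2πi/n), is an ideal Perron similarity: its first row is the all-ones vector, and for each k ∈ ⟨n⟩, the matrix F D_{r_k} F^{-1} is entrywise nonnegative, where r_k is the k-th row of F; indeed F D_{r_k} F^{-1} = C^{k-1} where C is the companion matrix of t^n − 1 (a permutation matrix for the n-cycle). -/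
/-!
The rows `r_i = (ζ ^ (i * j))_j` of the DFT matrix are the characters of `ℤ/n`, so
`r_i * r_k = r_(i+k)` entrywise: right multiplication by `D_(r_k)` shifts the rows of `F` by `k`,
i.e. `F D_(r_k) = P^k F` for the cyclic permutation matrix `P = C`. As a Vandermonde matrix in
distinct roots of unity `F` is invertible, hence `F D_(r_k) F⁻¹ = P^k`, a `0/1` matrix.
-/

open Matrix

def dftMatrix {R : Type*} [Monoid R] (ζ : R) (n : ℕ) : Matrix (Fin n) (Fin n) R :=
  fun i j => ζ ^ (i.val * j.val)

theorem pow_val_add_fin {M : Type*} [Monoid M] {x : M} {n : ℕ} (hx : x ^ n = 1) (a b : Fin n) :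
    x ^ (a + b).val = x ^ a.val * x ^ b.val := by
  rw [Fin.val_add, ← pow_eq_pow_mod _ hx, pow_add]

theorem permMatrix_finRotate_apply {R : Type*} [Zero R] [One R] {n : ℕ} (i j : Fin n) :
    (finRotate n).permMatrix R i j = if j.val = (i.val + 1) % n then 1 else 0 := by
  have := i.neZero
  simp only [PEquiv.toMatrix_toPEquiv_apply, Pi.single_apply, finRotate_apply, Fin.ext_iff,
    Fin.val_add, Fin.val_one', Nat.add_mod_mod]

theorem permMatrix_pow {ι R : Type*} [DecidableEq ι] [Fintype ι] [Semiring R]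
    (σ : Equiv.Perm ι) (k : ℕ) : (σ ^ k).permMatrix R = σ.permMatrix R ^ k := by
  induction k with
  | zero => simp
  | succ k ih => rw [pow_succ, permMatrix_mul, ih, pow_succ']

theorem permMatrix_finRotate_pow_val {R : Type*} [Semiring R] {n : ℕ} (k : Fin n) :
    (finRotate n).permMatrix R ^ k.val = (finCycle k).permMatrix R := by
  rw [← permMatrix_pow]
  congr
  ext i
  rw [Equiv.Perm.coe_pow, ← finCycle_eq_finRotate_iterate]

theorem exists_nonneg_real_permMatrix_apply {ι : Type*} [DecidableEq ι] (σ : Equiv.Perm ι)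
    (i j : ι) : ∃ r : ℝ, 0 ≤ r ∧ σ.permMatrix ℂ i j = r := by
  simp only [PEquiv.toMatrix_toPEquiv_apply, Pi.single_apply]
  split_ifs
  exacts [⟨1, zero_le_one, Complex.ofReal_one.symm⟩, ⟨0, le_rfl, Complex.ofReal_zero.symm⟩]

theorem dftMatrix_mul_diagonal_row {R : Type*} [CommSemiring R] {ζ : R} {n : ℕ}
    (hζ : ζ ^ n = 1) (k : Fin n) :
    dftMatrix ζ n * diagonal (dftMatrix ζ n k) = (finCycle k).permMatrix R * dftMatrix ζ n := by
  ext i j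
  have hζj : (ζ ^ j.val) ^ n = 1 := by rw [pow_right_comm, hζ, one_pow]
  rw [mul_diagonal, PEquiv.toMatrix_toPEquiv_mul]
  simp only [dftMatrix, submatrix_apply, finCycle_apply, id, mul_comm _ j.val, pow_mul,
    pow_val_add_fin hζj]

theorem isUnit_det_dftMatrix {K : Type*} [Field K] {ζ : K} {n : ℕ} (hζ : IsPrimitiveRoot ζ n) :
    IsUnit (dftMatrix ζ n).det := by
  have hF : dftMatrix ζ n = vandermonde fun i : Fin n => ζ ^ i.val := by
    ext i j
    simp only [dftMatrix, vandermonde_apply, pow_mul]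
  rw [hF, isUnit_iff_ne_zero, det_vandermonde_ne_zero_iff]
  exact fun i j hij => Fin.ext (hζ.pow_inj i.isLt j.isLt hij)

theorem dftMatrix_diagonal_row_conj {K : Type*} [Field K] {ζ : K} {n : ℕ}
    (hζ : IsPrimitiveRoot ζ n) (k : Fin n) :
    dftMatrix ζ n * diagonal (dftMatrix ζ n k) * (dftMatrix ζ n)⁻¹ =
      (finCycle k).permMatrix K := by
  rw [dftMatrix_mul_diagonal_row hζ.pow_eq_one, Matrix.mul_assoc,
    mul_nonsing_inv _ (isUnit_det_dftMatrix hζ), Matrix.mul_one]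

/-- The `n × n` discrete Fourier transform matrix, `F_{ij} = ω^{(i-1)(j-1)}` with
`ω = exp(2πi/n)`, is an ideal Perron similarity: its first row is the all-ones
vector, every row `r_k` lies in the spectracone (`F D_{r_k} F⁻¹` is entrywise a
nonnegative real), and indeed `F D_{r_k} F⁻¹ = C^{k-1}`, where `C` is the companion
matrix of `t^n - 1`, i.e. the permutation matrix of the `n`-cycle. -/
theorem dft_isIdealPerronSimilarity (n : ℕ) (hn : 1 ≤ n) :
    letI ω : ℂ := Complex.exp (2 * Real.pi * Complex.I / n)
    letI F : Matrix (Fin n) (Fin n) ℂ := fun i j => ω ^ (i.val * j.val)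
    letI C : Matrix (Fin n) (Fin n) ℂ :=
      fun i j => if j.val = (i.val + 1) % n then 1 else 0
    (∀ j, F ⟨0, hn⟩ j = 1) ∧
      (∀ k : Fin n, ∀ i j, ∃ r : ℝ, 0 ≤ r ∧
        (F * Matrix.diagonal (F k) * F⁻¹) i j = (r : ℂ)) ∧
      ∀ k : Fin n, F * Matrix.diagonal (F k) * F⁻¹ = C ^ k.val := by
  have hω := Complex.isPrimitiveRoot_exp n (by omega)
  have hC : (fun i j : Fin n => if j.val = (i.val + 1) % n then (1 : ℂ) else 0) =
      (finRotate n).permMatrix ℂ := by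
    ext i j
    rw [permMatrix_finRotate_apply]
  refine ⟨fun j => by simp, fun k i j => ?_, fun k => ?_⟩
  · obtain ⟨r, hr, hσ⟩ := exists_nonneg_real_permMatrix_apply (finCycle k) i j
    exact ⟨r, hr, (congrFun₂ (dftMatrix_diagonal_row_conj hω k) i j).trans hσ⟩
  · exact (dftMatrix_diagonal_row_conj hω k).trans (by rw [hC, permMatrix_finRotate_pow_val])
end
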